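/- arXiv:1807.00268 — 2 statements merged into one kernel-verified Lean document; each statement's English description precedes it below -/
import Mathlib

section
/- Let L be a dually ms Stone semi-Heyting algebra. Then for all x in L, x*″ = x*. -/
class SemiHeyting (α : Type*) extends Lattice α, BoundedOrder α where
  himp : α → α → α
  sh1 : ∀ x y : α, x ⊓ himp x y = x ⊓ y
  sh2 : ∀ x y z : α, x ⊓ himp y z = x ⊓ himp (x ⊓ y) (x ⊓ z)
  sh3 : ∀ x : α, himp x x = ⊤

namespace SemiHeyting

variable {α : Type*} [SemiHeyting α]

def star (x : α) : α := himp x ⊥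

end SemiHeyting

class DQD (α : Type*) extends SemiHeyting α where
  prime : α → α
  prime_bot : prime ⊥ = ⊤
  prime_top : prime ⊤ = ⊥
  prime_inf : ∀ x y : α, prime (x ⊓ y) = prime x ⊔ prime y
  prime_prime_sup : ∀ x y : α, prime (prime (x ⊔ y)) = prime (prime x) ⊔ prime (prime y)
  prime_prime_le : ∀ x : α, prime (prime x) ≤ x

class DmsSt (α : Type*) extends DQD α where
  stone : ∀ x : α, SemiHeyting.star x ⊔ SemiHeyting.star (SemiHeyting.star x) = ⊤
  jdm : ∀ x y : α, prime (x ⊔ y) = prime x ⊓ prime y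

open SemiHeyting DQD


/-!
A semi-Heyting algebra is distributive, and in it `x*` is disjoint from `x`, so the Stone
identity `x* ⊔ x** = ⊤` makes `x*` a complemented element with complement `x**`. In a DQD-algebra
every complemented element `a` (with complement `b`) is fixed by `″`: `a″ ⊔ b″ = (a ⊔ b)″ = ⊤`
and `b″ ≤ b` is disjoint from `a`, hence `a ≤ a″ ≤ a` by distributivity.
-/

namespace SemiHeyting

variable {α : Type*} [SemiHeyting α]

theorem le_himp_inf_of_inf_le {x y z : α} (h : x ⊓ z ≤ y) : z ≤ himp x (x ⊓ y) := by
  have hz : z ⊓ himp x (x ⊓ y) = z := by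
    have hzx : z ⊓ x ≤ y := inf_comm x z ▸ h
    rw [sh2, ← inf_assoc, inf_eq_left.mpr hzx, sh3, inf_top_eq]
  exact hz ▸ inf_le_right

theorem inf_sup_le_inf_sup_inf (a b c : α) : a ⊓ (b ⊔ c) ≤ a ⊓ b ⊔ a ⊓ c := by
  have hbc : b ⊔ c ≤ himp a (a ⊓ (a ⊓ b ⊔ a ⊓ c)) :=
    sup_le (le_himp_inf_of_inf_le le_sup_left) (le_himp_inf_of_inf_le le_sup_right)
  calc a ⊓ (b ⊔ c) ≤ a ⊓ himp a (a ⊓ (a ⊓ b ⊔ a ⊓ c)) := inf_le_inf_left a hbc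
    _ = a ⊓ (a ⊓ b ⊔ a ⊓ c) := by rw [sh1, ← inf_assoc, inf_idem]
    _ ≤ a ⊓ b ⊔ a ⊓ c := inf_le_right

instance toDistribLattice : DistribLattice α :=
  DistribLattice.ofInfSupLe inf_sup_le_inf_sup_inf

theorem disjoint_star (x : α) : Disjoint x (star x) :=
  disjoint_iff.mpr (by rw [star, sh1, inf_bot_eq])

end SemiHeyting

namespace DQD

variable {α : Type*} [DQD α]

theorem codisjoint_prime_prime {a b : α} (h : Codisjoint a b) :
    Codisjoint (prime (prime a)) (prime (prime b)) :=
  codisjoint_iff.mpr (by rw [← prime_prime_sup, h.eq_top, prime_top, prime_bot])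

theorem prime_prime_eq_of_isCompl {a b : α} (h : IsCompl a b) : prime (prime a) = a :=
  le_antisymm (prime_prime_le a) <|
    (h.disjoint.mono_right (prime_prime_le b)).le_of_codisjoint
      (codisjoint_prime_prime h.codisjoint).symm

end DQD

theorem DmsSt.isCompl_star {α : Type*} [DmsSt α] (x : α) : IsCompl (star x) (star (star x)) :=
  ⟨disjoint_star _, codisjoint_iff.mpr (stone x)⟩

theorem stmt14 {α : Type*} [DmsSt α] (x : α) :
    DQD.prime (DQD.prime (SemiHeyting.star x)) = SemiHeyting.star x :=
  prime_prime_eq_of_isCompl (DmsSt.isCompl_star x)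
end

section
/- Let L be a dually ms Stone semi-Heyting algebra. Then for all x in L, (x*)⁺ = x**, where y⁺ := y′*′. -/
open SemiHeyting DQD

/-! The Stone identity `x* ⊔ x** = ⊤` and De Morgan for `′` give `x*′ ⊓ x**′ = ⊥`, so `x**′ ≤ x*′*` and
`x*′*′ ≤ x**′′ ≤ x**`. Conversely `x*′*′ ⊔ x*′′ = (x*′* ⊓ x*′)′ = ⊤` and `x*′′ ≤ x*`, so `x*′*′ ⊔ x* = ⊤`;
as semi-Heyting algebras are distributive and `x** ⊓ x* = ⊥`, this forces `x** ≤ x*′*′`. -/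

namespace SemiHeyting

variable {α : Type*} [SemiHeyting α]

theorem le_himp_of_inf_eq {x y z : α} (h : x ⊓ y = x ⊓ z) : x ≤ himp y z := by
  have h2 := sh2 x y z
  rw [h, sh3, inf_top_eq] at h2
  exact h2.ge.trans inf_le_right

theorem inf_star_self (x : α) : x ⊓ star x = ⊥ := by
  rw [star, sh1, inf_bot_eq]

theorem le_star_of_inf_eq_bot {x y : α} (h : y ⊓ x = ⊥) : y ≤ star x :=
  le_himp_of_inf_eq (by rw [h, inf_bot_eq])

theorem inf_sup_le (x y z : α) : x ⊓ (y ⊔ z) ≤ x ⊓ y ⊔ x ⊓ z := by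
  have hy : y ≤ himp x (x ⊓ y ⊔ x ⊓ z) :=
    le_himp_of_inf_eq <| le_antisymm (le_inf inf_le_left (inf_comm x y ▸ le_sup_left))
      (inf_le_inf_left y (sup_le inf_le_left inf_le_left))
  have hz : z ≤ himp x (x ⊓ y ⊔ x ⊓ z) :=
    le_himp_of_inf_eq <| le_antisymm (le_inf inf_le_left (inf_comm x z ▸ le_sup_right))
      (inf_le_inf_left z (sup_le inf_le_left inf_le_left))
  calc x ⊓ (y ⊔ z) ≤ x ⊓ himp x (x ⊓ y ⊔ x ⊓ z) := inf_le_inf_left x (sup_le hy hz)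
    _ = x ⊓ (x ⊓ y ⊔ x ⊓ z) := sh1 x _
    _ ≤ x ⊓ y ⊔ x ⊓ z := inf_le_right

theorem le_of_inf_eq_bot_of_sup_eq_top {a b c : α} (hab : a ⊓ b = ⊥) (hcb : c ⊔ b = ⊤) :
    a ≤ c :=
  calc a = a ⊓ (c ⊔ b) := by rw [hcb, inf_top_eq]
    _ ≤ a ⊓ c ⊔ a ⊓ b := inf_sup_le a c b
    _ = a ⊓ c := by rw [hab, sup_bot_eq]
    _ ≤ c := inf_le_right

end SemiHeyting

namespace DQD

variable {α : Type*} [DQD α]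

theorem prime_antitone : Antitone (prime : α → α) := fun x y h => by
  rw [← inf_eq_left.mpr h, prime_inf]
  exact le_sup_right

theorem prime_star_prime_sup_self (y : α) : prime (star (prime y)) ⊔ y = ⊤ := by
  have h : prime (star (prime y)) ⊔ prime (prime y) = ⊤ := by
    rw [← prime_inf, inf_comm, inf_star_self, prime_bot]
  exact top_le_iff.mp (h ▸ sup_le_sup_left (prime_prime_le y) _)

theorem star_le_prime_star_prime (y : α) : star y ≤ prime (star (prime y)) :=
  le_of_inf_eq_bot_of_sup_eq_top (by rw [inf_comm, inf_star_self]) (prime_star_prime_sup_self y)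

end DQD

namespace DmsSt

variable {α : Type*} [DmsSt α]

theorem prime_star_prime_star_le (x : α) :
    prime (star (prime (star x))) ≤ star (star x) := by
  have h : prime (star (star x)) ⊓ prime (star x) = ⊥ := by
    rw [inf_comm, ← jdm, stone, prime_top]
  exact (prime_antitone (le_star_of_inf_eq_bot h)).trans (prime_prime_le _)

end DmsSt

theorem stmt16 {α : Type*} [DmsSt α] (x : α) :
    DQD.prime (SemiHeyting.star (DQD.prime (SemiHeyting.star x)))
      = SemiHeyting.star (SemiHeyting.star x) :=
  le_antisymm (DmsSt.prime_star_prime_star_le x) (star_le_prime_star_prime (star x))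
end
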